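/- Let w_1, …, w_n be independent random variables (the item weights), where for a fixed δ > 0 each w_i takes values in the interval [a_i − δ, a_i + δ] almost surely and has expectation E[w_i] = a_i. Fix a solution x ∈ {0,1}^n with s := Σ_{i=1}^n x_i > 0, set W(X) = Σ_{i=1}^n w_i x_i and E_W(X) = Σ_{i=1}^n a_i x_i, and let B be a real number with B ≥ E_W(X). Then Pr[W(X) ≥ B] ≤ ( e^{(B − E_W(X))/(δ s)} / ( ((δ s + B − E_W(X))/(δ s))^{(δ s + B − E_W(X))/(δ s)} ) )^{s/2}. -/

import Mathlib

/-!
Normalise the weights to `y i = (w i - (a i - δ)) / (2δ) * x i ∈ [0, 1]`, whose means `x i / 2`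
add up to `s / 2`; with `ε = (B - E_W(X)) / (δ s)` the event `W(X) ≥ B` is exactly
`∑ y i ≥ (1 + ε) s / 2`. Convexity of `exp` gives `exp (t y) ≤ 1 + (eᵗ - 1) y` on `[0, 1]`, hence
`mgf y t ≤ exp ((eᵗ - 1) E[y])`; by independence the same holds for `∑ y i`, and the exponential
Markov inequality at `t = log (1 + ε)` gives the multiplicative Chernoff bound.
-/

open MeasureTheory ProbabilityTheory Finset Real

lemma Real.exp_mul_le_one_add_mul_of_mem_Icc (t : ℝ) {y : ℝ} (hy : y ∈ Set.Icc (0 : ℝ) 1) :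
    exp (t * y) ≤ 1 + (exp t - 1) * y := by
  have h := convexOn_exp.2 (Set.mem_univ 0) (Set.mem_univ t) (sub_nonneg.2 hy.2) hy.1 (by ring)
  simp only [smul_eq_mul, mul_zero, zero_add, exp_zero, mul_one] at h
  rw [mul_comm]
  linarith

namespace ProbabilityTheory

variable {Ω : Type*} [MeasurableSpace Ω] {μ : Measure Ω} [IsProbabilityMeasure μ]

lemma mgf_le_exp_mul_integral_of_mem_Icc {Y : Ω → ℝ} (hY : AEMeasurable Y μ)
    (hrange : ∀ᵐ ω ∂μ, Y ω ∈ Set.Icc (0 : ℝ) 1) (t : ℝ) :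
    mgf Y μ t ≤ exp ((exp t - 1) * μ[Y]) := by
  have hint : Integrable Y μ := .of_mem_Icc 0 1 hY hrange
  calc mgf Y μ t ≤ μ[fun ω ↦ 1 + (exp t - 1) * Y ω] :=
        integral_mono_ae (integrable_exp_mul_of_mem_Icc hY hrange)
          ((integrable_const 1).add (hint.const_mul _))
          (hrange.mono fun ω hω ↦ exp_mul_le_one_add_mul_of_mem_Icc t hω)
    _ = 1 + (exp t - 1) * μ[Y] := by
        rw [integral_add (integrable_const 1) (hint.const_mul _), integral_const,
          integral_const_mul, probReal_univ, one_smul]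
    _ ≤ exp ((exp t - 1) * μ[Y]) := by linarith [add_one_le_exp ((exp t - 1) * μ[Y])]

theorem iIndepFun.measure_ge_le_of_mem_Icc {ι : Type*} [Fintype ι] {Y : ι → Ω → ℝ}
    (hindep : iIndepFun Y μ) (hmeas : ∀ i, Measurable (Y i))
    (hrange : ∀ i, ∀ᵐ ω ∂μ, Y i ω ∈ Set.Icc (0 : ℝ) 1) {ε : ℝ} (hε : 0 ≤ ε) :
    μ.real {ω | (1 + ε) * ∑ i, μ[Y i] ≤ ∑ i, Y i ω} ≤
      (exp ε / (1 + ε) ^ (1 + ε)) ^ ∑ i, μ[Y i] := by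
  set m := ∑ i, μ[Y i]
  have h1ε : 0 < 1 + ε := by linarith
  set t := log (1 + ε) with ht
  have hexp_t : exp t = 1 + ε := exp_log h1ε
  have hmgf : mgf (∑ i, Y i) μ t ≤ exp (ε * m) := calc
    mgf (∑ i, Y i) μ t = ∏ i, mgf (Y i) μ t := hindep.mgf_sum hmeas _
    _ ≤ ∏ i, exp (ε * μ[Y i]) := prod_le_prod (fun i _ ↦ mgf_nonneg) fun i _ ↦ by
          simpa [hexp_t] using
            mgf_le_exp_mul_integral_of_mem_Icc (hmeas i).aemeasurable (hrange i) t
    _ = exp (ε * m) := by rw [← exp_sum, ← mul_sum]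
  have hint : Integrable (fun ω ↦ exp (t * (∑ i, Y i) ω)) μ :=
    hindep.integrable_exp_mul_sum hmeas fun i _ ↦
      integrable_exp_mul_of_mem_Icc (hmeas i).aemeasurable (hrange i)
  calc μ.real {ω | (1 + ε) * m ≤ ∑ i, Y i ω}
      ≤ exp (-t * ((1 + ε) * m)) * mgf (∑ i, Y i) μ t := by
        simpa only [Finset.sum_apply] using
          measure_ge_le_exp_mul_mgf ((1 + ε) * m) (log_nonneg (by linarith)) hint
    _ ≤ exp (-t * ((1 + ε) * m)) * exp (ε * m) := by gcongr
    _ = (exp ε / (1 + ε) ^ (1 + ε)) ^ m := by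
        rw [rpow_def_of_pos h1ε, ← ht, ← exp_sub, ← exp_mul, ← exp_add]
        ring_nf

lemma integral_sub_div_two_mul_mul {W : Ω → ℝ} (hW : Integrable W μ) {a δ : ℝ}
    (hmean : μ[W] = a) (hδ : δ ≠ 0) (x : ℝ) :
    μ[fun ω ↦ (W ω - (a - δ)) / (2 * δ) * x] = x / 2 := by
  rw [integral_mul_const, integral_div, integral_sub hW (integrable_const _), integral_const,
    hmean, probReal_univ, one_smul]
  field_simp
  ring

end ProbabilityTheory

lemma sub_div_two_mul_mul_mem_Icc {w a δ x : ℝ} (hδ : 0 < δ)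
    (hw : w ∈ Set.Icc (a - δ) (a + δ)) (hx : x = 0 ∨ x = 1) :
    (w - (a - δ)) / (2 * δ) * x ∈ Set.Icc (0 : ℝ) 1 := by
  rcases hx with rfl | rfl
  · simp
  · rw [mul_one, Set.mem_Icc, le_div_iff₀ (by positivity), div_le_iff₀ (by positivity)]
    constructor <;> linarith [hw.1, hw.2]

lemma sum_sub_div_two_mul_mul {ι : Type*} [Fintype ι] (v a x : ι → ℝ) {δ : ℝ} (hδ : δ ≠ 0) :
    ∑ i, (v i - (a i - δ)) / (2 * δ) * x i =
      (∑ i, v i * x i - ∑ i, a i * x i + δ * ∑ i, x i) / (2 * δ) := by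
  simp only [mul_sum, ← sum_sub_distrib, ← sum_add_distrib, sum_div]
  refine sum_congr rfl fun i _ ↦ ?_
  field_simp
  ring

/-- Chernoff bound for the chance-constrained knapsack problem: for independent
item weights `w i` supported a.s. in `[a i - δ, a i + δ]` with mean `a i`, a
solution `x ∈ {0,1}^n` with `s = ∑ i, x i > 0`, weight `W(X) = ∑ i, w i * x i`,
expected weight `E_W(X) = ∑ i, a i * x i` and capacity `B ≥ E_W(X)`,
`Pr[W(X) ≥ B] ≤ (e^((B-E_W(X))/(δs)) / ((δs+B-E_W(X))/(δs))^((δs+B-E_W(X))/(δs)))^(s/2)`. -/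
theorem chernoff_bound_chance_constrained_knapsack
    {Ω : Type*} [MeasurableSpace Ω] (μ : Measure Ω) [IsProbabilityMeasure μ]
    (n : ℕ) (w : Fin n → Ω → ℝ) (a : Fin n → ℝ) (δ : ℝ) (hδ : 0 < δ)
    (hmeas : ∀ i, Measurable (w i))
    (hindep : iIndepFun w μ)
    (hrange : ∀ i, ∀ᵐ ω ∂μ, w i ω ∈ Set.Icc (a i - δ) (a i + δ))
    (hmean : ∀ i, μ[w i] = a i)
    (x : Fin n → ℝ) (hx : ∀ i, x i = 0 ∨ x i = 1)
    (s : ℝ) (hs : s = ∑ i, x i) (hs_pos : 0 < s)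
    (B : ℝ) (hB : ∑ i, a i * x i ≤ B) :
    (μ {ω | B ≤ ∑ i, w i ω * x i}).toReal ≤
      (Real.exp ((B - ∑ i, a i * x i) / (δ * s)) /
          ((δ * s + B - ∑ i, a i * x i) / (δ * s)) ^
            ((δ * s + B - ∑ i, a i * x i) / (δ * s))) ^ (s / 2) := by
  set E := ∑ i, a i * x i
  have hδs : 0 < δ * s := mul_pos hδ hs_pos
  set ε := (B - E) / (δ * s) with hε
  set y : Fin n → Ω → ℝ := fun i ω ↦ (w i ω - (a i - δ)) / (2 * δ) * x i
  have hy_indep : iIndepFun y μ :=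
    hindep.comp (fun i z ↦ (z - (a i - δ)) / (2 * δ) * x i) fun i ↦ by fun_prop
  have hy_range (i : Fin n) : ∀ᵐ ω ∂μ, y i ω ∈ Set.Icc (0 : ℝ) 1 :=
    (hrange i).mono fun ω hω ↦ sub_div_two_mul_mul_mem_Icc hδ hω (hx i)
  have hy_mean : ∑ i, μ[y i] = s / 2 := by
    simp only [y, integral_sub_div_two_mul_mul (.of_mem_Icc _ _ (hmeas _).aemeasurable
      (hrange _)) (hmean _) hδ.ne', hs, sum_div]
  have hevent : {ω | B ≤ ∑ i, w i ω * x i} = {ω | (1 + ε) * (s / 2) ≤ ∑ i, y i ω} := by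
    have hlhs : (1 + ε) * (s / 2) = (B - E + δ * s) / (2 * δ) := by rw [hε]; field_simp; ring
    ext ω
    rw [Set.mem_ofPred_eq, Set.mem_ofPred_eq, sum_sub_div_two_mul_mul _ _ _ hδ.ne', ← hs, hlhs,
      div_le_div_iff_of_pos_right (by positivity), add_le_add_iff_right, sub_le_sub_iff_right]
  have hbase : (δ * s + B - E) / (δ * s) = 1 + ε := by rw [hε]; field_simp; ring
  rw [hevent, hbase, ← hy_mean]
  exact hy_indep.measure_ge_le_of_mem_Icc (fun i ↦ by fun_prop) hy_range
    (div_nonneg (sub_nonneg.2 hB) hδs.le)
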